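/- Let H be a real Hilbert space, C ⊆ H nonempty, closed and convex, and A : H → H pseudomonotone. Let λ, λ' > 0, c ≥ 0, let w ∈ H, and let y ∈ C satisfy ⟨w − λAw − y, u − y⟩ ≤ 0 for all u ∈ C (i.e. y = P_C(w − λAw)), together with λ'‖Aw − Ay‖ ≤ c‖w − y‖. Then for every p ∈ C with ⟨Ap, u − p⟩ ≥ 0 for all u ∈ C, one has ‖y − λ(Ay − Aw) − p‖² ≤ ‖w − p‖² − (1 − c²λ²/λ'²)‖w − y‖². -/

import Mathlib

open scoped RealInnerProductSpace

/-!
Expanding the square gives an exact identity for the corrected Tseng point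
`y - λ (A y - A w)`: its squared distance to `p` equals `‖w - p‖² - ‖w - y‖²` plus three error
terms. The projection inequality tested at `u = p` makes the first one nonpositive,
pseudomonotonicity applied to `⟪A p, y - p⟫ ≥ 0` makes the second one nonpositive, and the
step-size condition bounds the last one by `c²λ²/λ'² ‖w - y‖²`.
-/

theorem norm_sub_smul_sub_sub_sq_eq {E : Type*} [NormedAddCommGroup E] [InnerProductSpace ℝ E]
    (w y p a b : E) (lam : ℝ) :
    ‖y - lam • (b - a) - p‖ ^ 2 =
      ‖w - p‖ ^ 2 - ‖w - y‖ ^ 2 + 2 * ⟪w - lam • a - y, p - y⟫ - 2 * lam * ⟪b, y - p⟫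
        + lam ^ 2 * ‖b - a‖ ^ 2 := by
  simp only [← real_inner_self_eq_norm_sq, inner_sub_left, inner_sub_right, real_inner_smul_left,
    real_inner_smul_right]
  rw [real_inner_comm b y, real_inner_comm a y, real_inner_comm b p, real_inner_comm a p,
    real_inner_comm y p, real_inner_comm w p, real_inner_comm w y]
  ring

theorem sq_mul_sq_le_of_mul_le {lam lam' c x z : ℝ} (hlam' : 0 < lam') (hx : 0 ≤ x)
    (h : lam' * x ≤ c * z) : lam ^ 2 * x ^ 2 ≤ c ^ 2 * lam ^ 2 / lam' ^ 2 * z ^ 2 := by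
  have hx' : x ≤ c * z / lam' := by rw [le_div_iff₀ hlam']; linarith
  calc lam ^ 2 * x ^ 2 ≤ lam ^ 2 * (c * z / lam') ^ 2 := by gcongr
    _ = c ^ 2 * lam ^ 2 / lam' ^ 2 * z ^ 2 := by ring

theorem stmt_11_general
    {H : Type*} [NormedAddCommGroup H] [InnerProductSpace ℝ H]
    (C : Set H)
    (A : H → H)
    (hApseudo : ∀ x y : H, 0 ≤ ⟪A x, y - x⟫ → 0 ≤ ⟪A y, y - x⟫)
    (lam lam' c : ℝ) (hlam : 0 < lam) (hlam' : 0 < lam')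
    (w y : H) (hyC : y ∈ C)
    (hproj : ∀ u ∈ C, ⟪w - lam • A w - y, u - y⟫ ≤ 0)
    (hstepsize : lam' * ‖A w - A y‖ ≤ c * ‖w - y‖) :
    ∀ p : H, p ∈ C → (∀ u ∈ C, 0 ≤ ⟪A p, u - p⟫) →
      ‖y - lam • (A y - A w) - p‖ ^ 2 ≤
        ‖w - p‖ ^ 2 - (1 - c ^ 2 * lam ^ 2 / lam' ^ 2) * ‖w - y‖ ^ 2 := by
  intro p hpC hpVI
  have hproj_p : ⟪w - lam • A w - y, p - y⟫ ≤ 0 := hproj p hpC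
  have hpseudo_y : 0 ≤ lam * ⟪A y, y - p⟫ := mul_nonneg hlam.le (hApseudo p y (hpVI y hyC))
  have hstep : lam ^ 2 * ‖A y - A w‖ ^ 2 ≤ c ^ 2 * lam ^ 2 / lam' ^ 2 * ‖w - y‖ ^ 2 := by
    rw [norm_sub_rev]
    exact sq_mul_sq_le_of_mul_le hlam' (norm_nonneg _) hstepsize
  rw [norm_sub_smul_sub_sub_sq_eq w y p (A w) (A y) lam]
  linarith

/-- Proposition 3.1(i): the one-step estimate for the projected Tseng point
in the variational-inequality case `B = N_C`. -/
theorem stmt_11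
    {H : Type*} [NormedAddCommGroup H] [InnerProductSpace ℝ H] [CompleteSpace H]
    (C : Set H) (hCne : C.Nonempty) (hCclosed : IsClosed C) (hCconv : Convex ℝ C)
    (A : H → H)
    (hApseudo : ∀ x y : H, 0 ≤ ⟪A x, y - x⟫ → 0 ≤ ⟪A y, y - x⟫)
    (lam lam' c : ℝ) (hlam : 0 < lam) (hlam' : 0 < lam') (hc : 0 ≤ c)
    (w y : H) (hyC : y ∈ C)
    (hproj : ∀ u ∈ C, ⟪w - lam • A w - y, u - y⟫ ≤ 0)
    (hstepsize : lam' * ‖A w - A y‖ ≤ c * ‖w - y‖) :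
    ∀ p : H, p ∈ C → (∀ u ∈ C, 0 ≤ ⟪A p, u - p⟫) →
      ‖y - lam • (A y - A w) - p‖ ^ 2 ≤
        ‖w - p‖ ^ 2 - (1 - c ^ 2 * lam ^ 2 / lam' ^ 2) * ‖w - y‖ ^ 2 :=
  stmt_11_general C A hApseudo lam lam' c hlam hlam' w y hyC hproj hstepsize
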